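/- Every univariate real polynomial of odd degree 2n+1 that is nonnegative on [α, β] (with α < β) can be written as (x - α) s(x) + (β - x) t(x) where s and t are sums of squares of polynomials of degree at most n. -/

import Mathlib

/-!
Induct on the degree. A polynomial `p ≥ 0` on `[α, β]` of positive degree has a factor `f ≥ 0` on
`[α, β]` of one of the shapes `X - r` (a root `r ≤ α`), `r - X` (a root `r ≥ β`), `(X - r)²` (an
interior root, which is a local minimum and hence at least double) or `(X - a)² + b²` (a non-real
root `a + b i`), and the cofactor stays nonnegative on `[α, β]` by continuity. Each such `f` lies in
the preordering generated by `X - α` and `β - X`, truncated at degree `deg f`, and these truncated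
preorderings multiply with additive degrees. Finally, in degree `2n + 1` every generator
`(X - α)^i (β - X)^j h²` is brought to the form `(X - α) s + (β - X) t` using
`β - α = (X - α) + (β - X)`.
-/

/-- A univariate real polynomial is a sum of squares of polynomials of degree at most `d`. -/
def IsSumOfSquaresOfDeg (d : ℕ) (p : Polynomial ℝ) : Prop :=
  ∃ (m : ℕ) (h : Fin m → Polynomial ℝ),
    (∀ i, (h i).natDegree ≤ d) ∧ p = ∑ i, (h i) ^ 2

open Polynomial Set
open scoped Pointwise

namespace IsSumOfSquaresOfDeg

variable {d : ℕ}

theorem zero : IsSumOfSquaresOfDeg d 0 := ⟨0, ![], by simp, by simp⟩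

theorem sq {h : ℝ[X]} (hh : h.natDegree ≤ d) : IsSumOfSquaresOfDeg d (h ^ 2) :=
  ⟨1, ![h], by simpa, by simp⟩

theorem add {p q : ℝ[X]} (hp : IsSumOfSquaresOfDeg d p) (hq : IsSumOfSquaresOfDeg d q) :
    IsSumOfSquaresOfDeg d (p + q) := by
  obtain ⟨m₁, h₁, hd₁, rfl⟩ := hp
  obtain ⟨m₂, h₂, hd₂, rfl⟩ := hq
  refine ⟨m₁ + m₂, Fin.append h₁ h₂, Fin.addCases (by simpa) (by simpa), ?_⟩
  simp [Fin.sum_univ_add]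

end IsSumOfSquaresOfDeg

namespace Polynomial

theorem natDegree_C_sub_X (b : ℝ) : (C b - X : ℝ[X]).natDegree = 1 := by
  rw [← neg_sub, natDegree_neg, natDegree_X_sub_C]

theorem natDegree_X_sub_C_sq_add_C_sq (a b : ℝ) : ((X - C a) ^ 2 + C b ^ 2).natDegree = 2 := by
  rw [natDegree_add_eq_left_of_natDegree_lt] <;> simp

theorem eval_nonneg_of_mul {α β : ℝ} (hαβ : α < β) {f q : ℝ[X]} (hf : f ≠ 0)
    (hf_nonneg : ∀ x ∈ Icc α β, 0 ≤ f.eval x) (hfq : ∀ x ∈ Icc α β, 0 ≤ (f * q).eval x) :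
    ∀ x ∈ Icc α β, 0 ≤ q.eval x := by
  have hdense : Dense {x | f.IsRoot x}ᶜ := (finite_setOfPred_isRoot hf).countable.dense_compl ℝ
  have hsub : Ioo α β ∩ {x | f.IsRoot x}ᶜ ⊆ {x | 0 ≤ q.eval x} := by
    rintro x ⟨hx, hfx⟩
    have hx' := Ioo_subset_Icc_self hx
    refine nonneg_of_mul_nonneg_right (by simpa using hfq x hx') ?_
    exact (hf_nonneg x hx').lt_of_ne' hfx
  rw [← closure_Ioo hαβ.ne]
  exact closure_minimal (hdense.open_subset_closure_inter isOpen_Ioo) isClosed_closure |>.trans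
    (closure_minimal hsub (isClosed_le continuous_const q.continuous))

theorem sq_X_sub_C_dvd_of_isLocalMin {p : ℝ[X]} (hp : p ≠ 0) {r : ℝ} (hroot : p.IsRoot r)
    (hmin : IsLocalMin (fun x ↦ p.eval x) r) : (X - C r) ^ 2 ∣ p :=
  (le_rootMultiplicity_iff hp).mp <| (one_lt_rootMultiplicity_iff_isRoot hp).mpr
    ⟨hroot, by simpa [Polynomial.deriv] using hmin.deriv_eq_zero⟩

theorem exists_isRoot_or_sq_add_sq_dvd {p : ℝ[X]} (hp : 0 < p.natDegree) :
    (∃ r, p.IsRoot r) ∨ ∃ a b : ℝ, (X - C a) ^ 2 + C b ^ 2 ∣ p := by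
  obtain ⟨z, hz⟩ := IsAlgClosed.exists_aeval_eq_zero ℂ p (natDegree_pos_iff_degree_pos.mp hp).ne'
  by_cases him : z.im = 0
  · refine .inl ⟨z.re, ?_⟩
    rw [show z = algebraMap ℝ ℂ z.re from Complex.ext rfl (by simpa using him),
      aeval_algebraMap_apply_eq_algebraMap_eval] at hz
    simpa using hz
  · refine .inr ⟨z.re, z.im, ?_⟩
    convert quadratic_dvd_of_aeval_eq_zero_im_ne_zero p hz him using 1
    rw [Complex.sq_norm, Complex.normSq_apply]
    simp only [C_mul, C_add, C_ofNat]
    ring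

end Polynomial

/-- The truncation to degree `d` of the preordering generated by `X - α` and `β - X`.
Allowing arbitrary exponents `i`, `j` makes the generating set closed under multiplication. -/
noncomputable def truncPreordering (α β : ℝ) (d : ℕ) : AddSubmonoid ℝ[X] :=
  AddSubmonoid.closure
    {p | ∃ (i j : ℕ) (h : ℝ[X]), i + j + 2 * h.natDegree ≤ d ∧
      p = (X - C α) ^ i * (C β - X) ^ j * h ^ 2}

namespace truncPreordering

variable {α β : ℝ} {d e : ℕ}

theorem generator_mem {i j : ℕ} {h : ℝ[X]} (hd : i + j + 2 * h.natDegree ≤ d) :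
    (X - C α) ^ i * (C β - X) ^ j * h ^ 2 ∈ truncPreordering α β d :=
  AddSubmonoid.subset_closure ⟨i, j, h, hd, rfl⟩

theorem sq_mem {h : ℝ[X]} (hd : 2 * h.natDegree ≤ d) : h ^ 2 ∈ truncPreordering α β d := by
  simpa using generator_mem (α := α) (β := β) (i := 0) (j := 0) (by simpa using hd)

theorem mul_mem {p q : ℝ[X]} (hp : p ∈ truncPreordering α β d)
    (hq : q ∈ truncPreordering α β e) : p * q ∈ truncPreordering α β (d + e) := by
  suffices truncPreordering α β d * truncPreordering α β e ≤ truncPreordering α β (d + e) from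
    this (AddSubmonoid.mul_mem_mul hp hq)
  rw [truncPreordering, truncPreordering, AddSubmonoid.closure_mul_closure]
  refine AddSubmonoid.closure_mono ?_
  rintro _ ⟨_, ⟨i, j, h, hd, rfl⟩, _, ⟨i', j', h', he, rfl⟩, rfl⟩
  refine ⟨i + i', j + j', h * h', ?_, by ring⟩
  have := natDegree_mul_le (p := h) (q := h')
  omega

theorem X_sub_C_mem {r : ℝ} (hr : r ≤ α) : X - C r ∈ truncPreordering α β 1 := by
  have : X - C r = (X - C α) ^ 1 * (C β - X) ^ 0 * 1 ^ 2 + C √(α - r) ^ 2 := by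
    rw [← C_pow, Real.sq_sqrt (sub_nonneg.mpr hr), C_sub]
    ring
  rw [this]
  exact add_mem (generator_mem (by simp)) (sq_mem (by simp))

theorem C_sub_X_mem {r : ℝ} (hr : β ≤ r) : C r - X ∈ truncPreordering α β 1 := by
  have : C r - X = (X - C α) ^ 0 * (C β - X) ^ 1 * 1 ^ 2 + C √(r - β) ^ 2 := by
    rw [← C_pow, Real.sq_sqrt (sub_nonneg.mpr hr), C_sub]
    ring
  rw [this]
  exact add_mem (generator_mem (by simp)) (sq_mem (by simp))

theorem X_sub_C_sq_add_C_sq_mem (a b : ℝ) :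
    (X - C a) ^ 2 + C b ^ 2 ∈ truncPreordering α β 2 :=
  add_mem (sq_mem (by rw [natDegree_X_sub_C])) (sq_mem (by simp))

variable {n : ℕ}

theorem exists_odd_repr_of_lt_two (hαβ : α < β) {i j : ℕ} (hi : i < 2) (hj : j < 2) {k : ℝ[X]}
    (hk : i + j + 2 * k.natDegree ≤ 2 * n + 1) :
    ∃ s t, IsSumOfSquaresOfDeg n s ∧ IsSumOfSquaresOfDeg n t ∧
      (X - C α) ^ i * (C β - X) ^ j * k ^ 2 = (X - C α) * s + (C β - X) * t := by
  obtain ⟨c, hc⟩ : ∃ c : ℝ, C c ^ 2 * ((X - C α) + (C β - X)) = 1 := by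
    refine ⟨(√(β - α))⁻¹, ?_⟩
    rw [← C_pow, inv_pow, Real.sq_sqrt (by linarith), sub_add_sub_cancel', ← C_sub, ← C_mul,
      inv_mul_cancel₀ (by linarith), C_1]
  interval_cases i <;> interval_cases j
  · refine ⟨(C c * k) ^ 2, (C c * k) ^ 2, .sq ?_, .sq ?_, by linear_combination (-k ^ 2) * hc⟩ <;>
      exact (natDegree_C_mul_le _ _).trans (by omega)
  · exact ⟨0, k ^ 2, .zero, .sq (by omega), by ring⟩
  · exact ⟨k ^ 2, 0, .sq (by omega), .zero, by ring⟩
  · have hdeg (g : ℝ[X]) (hg : g.natDegree = 1) : (C c * g * k).natDegree ≤ n :=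
      natDegree_mul_le.trans <| by
        have := (natDegree_C_mul_le c g).trans hg.le
        omega
    exact ⟨(C c * (C β - X) * k) ^ 2, (C c * (X - C α) * k) ^ 2,
      .sq (hdeg _ (natDegree_C_sub_X β)), .sq (hdeg _ (natDegree_X_sub_C α)),
      by linear_combination (-(X - C α) * (C β - X) * k ^ 2) * hc⟩

theorem generator_eq_mod_two (i j : ℕ) (h : ℝ[X]) :
    (X - C α) ^ i * (C β - X) ^ j * h ^ 2 =
      (X - C α) ^ (i % 2) * (C β - X) ^ (j % 2) *
        ((X - C α) ^ (i / 2) * (C β - X) ^ (j / 2) * h) ^ 2 := by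
  conv_lhs => rw [← Nat.mod_add_div i 2, ← Nat.mod_add_div j 2]
  ring

theorem natDegree_pow_mul_pow_mul_le (i j : ℕ) (h : ℝ[X]) :
    ((X - C α) ^ i * (C β - X) ^ j * h).natDegree ≤ i + j + h.natDegree := by
  have hi : ((X - C α) ^ i).natDegree = i := by rw [natDegree_pow, natDegree_X_sub_C, mul_one]
  have hj : ((C β - X) ^ j).natDegree = j := by rw [natDegree_pow, natDegree_C_sub_X, mul_one]
  have := natDegree_mul_le (p := (X - C α) ^ i) (q := (C β - X) ^ j)
  have := natDegree_mul_le (p := (X - C α) ^ i * (C β - X) ^ j) (q := h)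
  omega

theorem exists_odd_repr_of_mem (hαβ : α < β) {p : ℝ[X]}
    (hp : p ∈ truncPreordering α β (2 * n + 1)) :
    ∃ s t, IsSumOfSquaresOfDeg n s ∧ IsSumOfSquaresOfDeg n t ∧
      p = (X - C α) * s + (C β - X) * t := by
  induction hp using AddSubmonoid.closure_induction with
  | mem p hp =>
    obtain ⟨i, j, h, hd, rfl⟩ := hp
    rw [generator_eq_mod_two]
    have := natDegree_pow_mul_pow_mul_le (α := α) (β := β) (i / 2) (j / 2) h
    exact exists_odd_repr_of_lt_two hαβ (Nat.mod_lt _ two_pos) (Nat.mod_lt _ two_pos) (by omega)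
  | zero => exact ⟨0, 0, .zero, .zero, by ring⟩
  | add p q _ _ hp hq =>
    obtain ⟨s, t, hs, ht, rfl⟩ := hp
    obtain ⟨s', t', hs', ht', rfl⟩ := hq
    exact ⟨s + s', t + t', hs.add hs', ht.add ht', by ring⟩

theorem exists_nonneg_factor_mem {p : ℝ[X]} (hp : 0 < p.natDegree)
    (hpos : ∀ x ∈ Icc α β, 0 ≤ p.eval x) :
    ∃ f q, p = f * q ∧ 0 < f.natDegree ∧ f ∈ truncPreordering α β f.natDegree ∧
      ∀ x ∈ Icc α β, 0 ≤ f.eval x := by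
  rcases exists_isRoot_or_sq_add_sq_dvd hp with ⟨r, hr⟩ | ⟨a, b, q, rfl⟩
  swap
  · refine ⟨_, q, rfl, ?_, ?_, fun x _ ↦ ?_⟩
    · rw [natDegree_X_sub_C_sq_add_C_sq]
      exact two_pos
    · rw [natDegree_X_sub_C_sq_add_C_sq]
      exact X_sub_C_sq_add_C_sq_mem a b
    · simp only [eval_add, eval_pow, eval_sub, eval_X, eval_C]
      positivity
  obtain ⟨q, hq⟩ := dvd_iff_isRoot.mpr hr
  rcases le_or_gt r α with hrα | hαr
  · refine ⟨X - C r, q, hq, by simp, ?_, fun x hx ↦ by simp [hrα.trans hx.1]⟩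
    rw [natDegree_X_sub_C]
    exact X_sub_C_mem hrα
  rcases le_or_gt β r with hβr | hrβ
  · refine ⟨C r - X, -q, by rw [hq]; ring, by simp [natDegree_C_sub_X], ?_,
      fun x hx ↦ by simp [hx.2.trans hβr]⟩
    rw [natDegree_C_sub_X]
    exact C_sub_X_mem hβr
  have hp0 : p ≠ 0 := ne_zero_of_natDegree_gt hp
  have hmin : IsLocalMin (fun x ↦ p.eval x) r :=
    Filter.eventually_of_mem (isOpen_Ioo.mem_nhds ⟨hαr, hrβ⟩) fun x hx ↦ by
      simpa [hr.eq_zero] using hpos x (Ioo_subset_Icc_self hx)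
  obtain ⟨q, rfl⟩ := sq_X_sub_C_dvd_of_isLocalMin hp0 hr hmin
  refine ⟨(X - C r) ^ 2, q, rfl, by simp, ?_, fun x _ ↦ by
    simp only [eval_pow, eval_sub, eval_X, eval_C]; positivity⟩
  rw [natDegree_pow, natDegree_X_sub_C]
  exact sq_mem (by simp)

theorem mem_of_nonneg (hαβ : α < β) {p : ℝ[X]}
    (hp : ∀ x ∈ Icc α β, 0 ≤ p.eval x) : p ∈ truncPreordering α β p.natDegree := by
  induction hn : p.natDegree using Nat.strong_induction_on generalizing p with
  | _ n ih =>
  rcases Nat.eq_zero_or_pos n with rfl | hn0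
  · have hp_const := eq_C_of_natDegree_eq_zero hn
    have hc : p = C √(p.coeff 0) ^ 2 := by
      have := hp α ⟨le_rfl, hαβ.le⟩
      rw [hp_const, eval_C] at this
      rw [← C_pow, Real.sq_sqrt this, ← hp_const]
    rw [hc]
    exact sq_mem (by simp)
  obtain ⟨f, q, rfl, hf_deg, hf_mem, hf_nonneg⟩ :=
    exists_nonneg_factor_mem (hn ▸ hn0) hp
  have hf0 : f ≠ 0 := ne_zero_of_natDegree_gt hf_deg
  have hq0 : q ≠ 0 := by
    rintro rfl
    rw [mul_zero, natDegree_zero] at hn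
    omega
  rw [natDegree_mul hf0 hq0] at hn
  rw [← hn]
  exact mul_mem hf_mem (ih _ (by omega) (eval_nonneg_of_mul hαβ hf0 hf_nonneg hp) rfl)

end truncPreordering

theorem markov_lukacs_odd
    (α β : ℝ) (hαβ : α < β) (n : ℕ) (p : Polynomial ℝ)
    (hdeg : p.natDegree = 2 * n + 1)
    (hpos : ∀ x ∈ Set.Icc α β, 0 ≤ p.eval x) :
    ∃ s t : Polynomial ℝ, IsSumOfSquaresOfDeg n s ∧ IsSumOfSquaresOfDeg n t ∧
      p = (Polynomial.X - Polynomial.C α) * s + (Polynomial.C β - Polynomial.X) * t :=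
  truncPreordering.exists_odd_repr_of_mem hαβ (hdeg ▸ truncPreordering.mem_of_nonneg hαβ hpos)
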